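/- arXiv:0909.2929 — 2 statements merged into one kernel-verified Lean document; each statement's English description precedes it below -/
import Mathlib

section
/- Let ω : ℝ → ℝ be a nonnegative càdlàg function with ω(0) = 0, which is continuous at its local extrema, and for which 0 is the unique minimum point, i.e. ω(y) ∧ ω(y−) > 0 for every y ≠ 0. Then for all real numbers a ≤ α < 0 < β ≤ b, the ratio ( ∫_a^b e^{−c·ω(y)} dy ) / ( ∫_α^β e^{−c·ω(y)} dy ) converges to 1 as c → +∞. -/
/-!
A càdlàg function is bounded away from `0` near every point where both it and its left limit are
positive, so compactness gives `m > 0` with `ω ≥ m` on `[a, α] ∪ [β, b]`. Right-continuity at `0`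
gives `ω ≤ m / 2` on some `[0, δ]`, so the integral over `[α, β]` is at least `δ e^{-cm/2}`, whereas
the two integrals differ by at most `(α - a + b - β) e^{-cm}`.
-/

open Filter Set Topology Function

/-- A function `ω : ℝ → ℝ` is càdlàg: right-continuous everywhere, with left limits
everywhere. `ω(x−)` is then `Function.leftLim ω x`. -/
def Cadlag (ω : ℝ → ℝ) : Prop :=
  (∀ x : ℝ, ContinuousWithinAt ω (Set.Ici x) x) ∧
  (∀ x : ℝ, ∃ l : ℝ, Tendsto ω (𝓝[<] x) (𝓝 l))

/-- `x0` is a left local maximum of `ω`. -/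
def LeftLocalMax (ω : ℝ → ℝ) (x0 : ℝ) : Prop :=
  ∃ ε > (0 : ℝ), ∀ x ∈ Set.Ioo (x0 - ε) x0, ω x ≤ Function.leftLim ω x0

/-- `x0` is a right local maximum of `ω`. -/
def RightLocalMax (ω : ℝ → ℝ) (x0 : ℝ) : Prop :=
  ∃ ε > (0 : ℝ), ∀ x ∈ Set.Ioo x0 (x0 + ε), ω x ≤ ω x0

/-- `x0` is a left local minimum of `ω`. -/
def LeftLocalMin (ω : ℝ → ℝ) (x0 : ℝ) : Prop :=
  ∃ ε > (0 : ℝ), ∀ x ∈ Set.Ioo (x0 - ε) x0, Function.leftLim ω x0 ≤ ω x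

/-- `x0` is a right local minimum of `ω`. -/
def RightLocalMin (ω : ℝ → ℝ) (x0 : ℝ) : Prop :=
  ∃ ε > (0 : ℝ), ∀ x ∈ Set.Ioo x0 (x0 + ε), ω x0 ≤ ω x

/-- `x0` is a local extremum of `ω`. -/
def LocalExtremum (ω : ℝ → ℝ) (x0 : ℝ) : Prop :=
  LeftLocalMax ω x0 ∨ RightLocalMax ω x0 ∨ LeftLocalMin ω x0 ∨ RightLocalMin ω x0

/-- `ω` is continuous at its local extrema. -/
def ContinuousAtLocalExtrema (ω : ℝ → ℝ) : Prop :=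
  ∀ x0 : ℝ, LocalExtremum ω x0 → ω x0 = Function.leftLim ω x0

open Real MeasureTheory intervalIntegral Asymptotics

lemma tendsto_ceil_mul_div_nhdsGE (x : ℝ) :
    Tendsto (fun n : ℕ => (⌈x * (n + 1)⌉ : ℝ) / (n + 1)) atTop (𝓝[≥] x) := by
  have hpos (n : ℕ) : (0 : ℝ) < n + 1 := n.cast_add_one_pos
  have hge (n : ℕ) : x ≤ (⌈x * (n + 1)⌉ : ℝ) / (n + 1) :=
    (le_div_iff₀ (hpos n)).2 (Int.le_ceil _)
  have hle (n : ℕ) : (⌈x * (n + 1)⌉ : ℝ) / (n + 1) ≤ x + 1 / (n + 1) := by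
    rw [div_le_iff₀ (hpos n), add_mul, one_div_mul_cancel (hpos n).ne']
    exact (Int.ceil_lt_add_one _).le
  have hupper : Tendsto (fun n : ℕ => x + 1 / ((n : ℝ) + 1)) atTop (𝓝 x) := by
    simpa using (tendsto_const_nhds (x := x)).add tendsto_one_div_add_atTop_nhds_zero_nat
  exact tendsto_nhdsWithin_of_tendsto_nhds_of_eventually_within _
    (tendsto_of_tendsto_of_tendsto_of_le_of_le tendsto_const_nhds hupper hge hle)
    (Eventually.of_forall hge)

lemma measurable_of_continuousWithinAt_Ici {β : Type*} [TopologicalSpace β]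
    [TopologicalSpace.PseudoMetrizableSpace β] [MeasurableSpace β] [BorelSpace β] {f : ℝ → β}
    (hf : ∀ x, ContinuousWithinAt f (Ici x) x) : Measurable f :=
  measurable_of_tendsto_metrizable' atTop
    (f := fun (n : ℕ) x => f (⌈x * ((n : ℝ) + 1)⌉ / ((n : ℝ) + 1)))
    (fun n => (measurable_of_countable (fun k : ℤ => f (k / ((n : ℝ) + 1)))).comp
      (Int.measurable_ceil.comp (measurable_id.mul_const _)))
    (tendsto_pi_nhds.2 fun x => (hf x).tendsto.comp (tendsto_ceil_mul_div_nhdsGE x))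

lemma IsCompact.exists_pos_forall_le {X : Type*} [TopologicalSpace X] {K : Set X}
    (hK : IsCompact K) {f : X → ℝ} (hf : ∀ x ∈ K, ∃ r > 0, ∀ᶠ y in 𝓝 x, r ≤ f y) :
    ∃ m > 0, ∀ x ∈ K, m ≤ f x := by
  refine hK.induction_on (p := fun s => ∃ m > 0, ∀ x ∈ s, m ≤ f x) ⟨1, one_pos, by simp⟩
    (fun s t hst ⟨m, hm, ht⟩ => ⟨m, hm, fun x hx => ht x (hst hx)⟩)
    (fun s t ⟨m, hm, hs⟩ ⟨n, hn, ht⟩ => ⟨min m n, lt_min hm hn, ?_⟩)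
    (fun x hx => ?_)
  · rintro x (hx | hx)
    exacts [(min_le_left _ _).trans (hs x hx), (min_le_right _ _).trans (ht x hx)]
  · obtain ⟨r, hr, hx⟩ := hf x hx
    exact ⟨{y | r ≤ f y}, mem_nhdsWithin_of_mem_nhds hx, r, hr, fun y hy => hy⟩

lemma Asymptotics.isBigO_of_eventually_const_mul_le {ι : Type*} {l : Filter ι} {f g : ι → ℝ}
    {δ : ℝ} (hδ : 0 < δ) (hf : ∀ x, 0 ≤ f x) (h : ∀ᶠ x in l, δ * f x ≤ g x) : f =O[l] g :=
  IsBigO.of_bound δ⁻¹ <| h.mono fun x hx => by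
    rw [norm_of_nonneg (hf x), norm_of_nonneg ((mul_nonneg hδ.le (hf x)).trans hx),
      inv_mul_eq_div, le_div_iff₀ hδ, mul_comm]
    exact hx

lemma ContinuousWithinAt.exists_Ioc_forall_Icc_le {f : ℝ → ℝ} {x y M : ℝ}
    (hf : ContinuousWithinAt f (Ici x) x) (hfx : f x < M) (hxy : x < y) :
    ∃ z ∈ Ioc x y, ∀ t ∈ Icc x z, f t ≤ M := by
  obtain ⟨u, hu, hsub⟩ :=
    mem_nhdsGE_iff_exists_Icc_subset.1 (hf.tendsto.eventually (eventually_le_nhds hfx))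
  exact ⟨min u y, ⟨lt_min hu hxy, min_le_right _ _⟩,
    fun t ht => hsub ⟨ht.1, ht.2.trans (min_le_left _ _)⟩⟩

namespace Cadlag

variable {ω : ℝ → ℝ}

lemma eventually_gt (hω : Cadlag ω) {x r : ℝ} (hr : r < min (ω x) (leftLim ω x)) :
    ∀ᶠ y in 𝓝 x, r < ω y := by
  obtain ⟨l, hl⟩ := hω.2 x
  rw [leftLim_eq_of_tendsto hl, lt_min_iff] at hr
  rw [← nhdsLT_sup_nhdsGE, eventually_sup]
  exact ⟨hl.eventually (eventually_gt_nhds hr.2),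
    (hω.1 x).tendsto.eventually (eventually_gt_nhds hr.1)⟩

lemma exists_pos_forall_le (hω : Cadlag ω) {K : Set ℝ} (hK : IsCompact K)
    (hpos : ∀ x ∈ K, 0 < min (ω x) (leftLim ω x)) : ∃ m > 0, ∀ x ∈ K, m ≤ ω x :=
  hK.exists_pos_forall_le fun x hx => ⟨_, half_pos (hpos x hx),
    (hω.eventually_gt (half_lt_self (hpos x hx))).mono fun _ => le_of_lt⟩

end Cadlag

section ExpWeight

variable {ω : ℝ → ℝ} {c p q : ℝ}

lemma intervalIntegrable_exp_neg_mul (hω : Measurable ω) (hnonneg : ∀ y, 0 ≤ ω y)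
    (hc : 0 ≤ c) (p q : ℝ) : IntervalIntegrable (fun y => exp (-(c * ω y))) volume p q :=
  (intervalIntegrable_const (c := (1 : ℝ))).mono_fun (by fun_prop) <|
    Eventually.of_forall fun y => by
      simpa [abs_of_pos (exp_pos _)] using mul_nonneg hc (hnonneg y)

lemma integral_exp_neg_mul_le (hc : 0 ≤ c) (hpq : p ≤ q) {m : ℝ}
    (hm : ∀ y ∈ Icc p q, m ≤ ω y) :
    ∫ y in p..q, exp (-(c * ω y)) ≤ (q - p) * exp (-(c * m)) := by
  have hbound : ∀ y ∈ uIoc p q, ‖exp (-(c * ω y))‖ ≤ exp (-(c * m)) := fun y hy => by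
    rw [uIoc_of_le hpq] at hy
    rw [norm_of_nonneg (exp_pos _).le]
    exact exp_le_exp.2 (neg_le_neg (mul_le_mul_of_nonneg_left (hm y (Ioc_subset_Icc_self hy)) hc))
  calc ∫ y in p..q, exp (-(c * ω y)) ≤ ‖∫ y in p..q, exp (-(c * ω y))‖ := Real.le_norm_self _
    _ ≤ exp (-(c * m)) * |q - p| := intervalIntegral.norm_integral_le_of_norm_le_const hbound
    _ = (q - p) * exp (-(c * m)) := by rw [abs_of_nonneg (sub_nonneg.2 hpq), mul_comm]

lemma le_integral_exp_neg_mul (hint : IntervalIntegrable (fun y => exp (-(c * ω y))) volume p q)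
    (hc : 0 ≤ c) (hpq : p ≤ q) {M : ℝ} (hM : ∀ y ∈ Icc p q, ω y ≤ M) :
    (q - p) * exp (-(c * M)) ≤ ∫ y in p..q, exp (-(c * ω y)) := by
  calc (q - p) * exp (-(c * M)) = ∫ _ in p..q, exp (-(c * M)) := by simp
    _ ≤ _ := integral_mono_on hpq intervalIntegrable_const hint fun y hy =>
      exp_le_exp.2 (neg_le_neg (mul_le_mul_of_nonneg_left (hM y hy) hc))

lemma abs_integral_sub_integral_exp_neg_mul_le (hω : Measurable ω) (hnonneg : ∀ y, 0 ≤ ω y)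
    (hc : 0 ≤ c) {a α β b m : ℝ} (hαa : a ≤ α) (hβb : β ≤ b)
    (hm : ∀ y ∈ Icc a α ∪ Icc β b, m ≤ ω y) :
    |(∫ y in a..b, exp (-(c * ω y))) - ∫ y in α..β, exp (-(c * ω y))| ≤
      (α - a + (b - β)) * exp (-(c * m)) := by
  have hint := intervalIntegrable_exp_neg_mul hω hnonneg hc
  have hpos : ∀ y, 0 ≤ exp (-(c * ω y)) := fun y => (exp_pos _).le
  rw [integral_interval_sub_interval_comm' (hint a b) (hint α β) (hint a α), integral_symm a α,
    sub_neg_eq_add, abs_of_nonneg (add_nonneg (integral_nonneg hβb fun y _ => hpos y)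
      (integral_nonneg hαa fun y _ => hpos y))]
  linarith [integral_exp_neg_mul_le hc hβb fun y hy => hm y (Or.inr hy),
    integral_exp_neg_mul_le hc hαa fun y hy => hm y (Or.inl hy)]

lemma mul_exp_neg_mul_le_integral (hω : Measurable ω) (hnonneg : ∀ y, 0 ≤ ω y) (hc : 0 ≤ c)
    {α β δ M : ℝ} (hα : α ≤ 0) (hδ : 0 ≤ δ) (hδβ : δ ≤ β) (hM : ∀ y ∈ Icc 0 δ, ω y ≤ M) :
    δ * exp (-(c * M)) ≤ ∫ y in α..β, exp (-(c * ω y)) := by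
  have hint := intervalIntegrable_exp_neg_mul hω hnonneg hc
  calc δ * exp (-(c * M)) = (δ - 0) * exp (-(c * M)) := by rw [sub_zero]
    _ ≤ ∫ y in 0..δ, exp (-(c * ω y)) := le_integral_exp_neg_mul (hint 0 δ) hc hδ hM
    _ ≤ ∫ y in α..β, exp (-(c * ω y)) :=
      integral_mono_interval hα hδ hδβ (Eventually.of_forall fun _ => (exp_pos _).le) (hint α β)

end ExpWeight

theorem integral_ratio_tendsto_one_general
    (ω : ℝ → ℝ) (hcad : Cadlag ω) (hnonneg : ∀ y : ℝ, 0 ≤ ω y) (h0 : ω 0 = 0)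
    (hmin : ∀ y : ℝ, y ≠ 0 → 0 < min (ω y) (Function.leftLim ω y))
    (a α β b : ℝ) (h1 : a ≤ α) (h2 : α < 0) (h3 : 0 < β) (h4 : β ≤ b) :
    Tendsto (fun c : ℝ =>
        (∫ y in a..b, Real.exp (-(c * ω y))) / (∫ y in α..β, Real.exp (-(c * ω y))))
      atTop (𝓝 1) := by
  have hω := measurable_of_continuousWithinAt_Ici hcad.1
  obtain ⟨m, hm, hmK⟩ := hcad.exists_pos_forall_le (K := Icc a α ∪ Icc β b)
    (isCompact_Icc.union isCompact_Icc) fun x hx => hmin x <| by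
      rintro rfl
      rcases hx with hx | hx <;> linarith [hx.1, hx.2]
  obtain ⟨δ, ⟨hδ, hδβ⟩, hδm⟩ :=
    (hcad.1 0).exists_Ioc_forall_Icc_le (M := m / 2) (by rw [h0]; positivity) h3
  have hcenter : ∀ᶠ c in atTop, δ * exp (-(c * (m / 2))) ≤ ∫ y in α..β, exp (-(c * ω y)) :=
    (eventually_ge_atTop 0).mono fun c hc =>
      mul_exp_neg_mul_le_integral hω hnonneg hc h2.le hδ.le hδβ hδm
  have htail : (fun c => (∫ y in a..b, exp (-(c * ω y))) - ∫ y in α..β, exp (-(c * ω y)))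
      =O[atTop] fun c => exp (-(c * m)) :=
    IsBigO.of_bound _ <| (eventually_ge_atTop 0).mono fun c hc => by
      simpa [norm_of_nonneg (exp_pos _).le] using
        abs_integral_sub_integral_exp_neg_mul_le hω hnonneg hc h1 h4 hmK
  have hexp : (fun c => exp (-(c * m))) =o[atTop] fun c => exp (-(c * (m / 2))) :=
    isLittleO_exp_comp_exp_comp.2 <|
      (tendsto_id.atTop_mul_const (half_pos hm)).congr fun c => by simp only [id]; ring
  have hdenom : (fun c => exp (-(c * (m / 2)))) =O[atTop]
      fun c => ∫ y in α..β, exp (-(c * ω y)) :=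
    isBigO_of_eventually_const_mul_le hδ (fun _ => (exp_pos _).le) hcenter
  have hne : ∀ᶠ c in atTop, ∫ y in α..β, exp (-(c * ω y)) ≠ 0 :=
    hcenter.mono fun c hle => ((mul_pos hδ (exp_pos _)).trans_le hle).ne'
  exact (isEquivalent_iff_tendsto_one hne).1 ((htail.trans_isLittleO hexp).trans_isBigO hdenom)

/-- Let `ω : ℝ → ℝ` be a nonnegative càdlàg function with `ω 0 = 0`,
continuous at its local extrema, with `0` the unique minimum point
(`ω(y) ∧ ω(y−) > 0` for `y ≠ 0`).  Then for all `a ≤ α < 0 < β ≤ b`,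
`(∫_a^b e^{−c·ω(y)} dy) / (∫_α^β e^{−c·ω(y)} dy) → 1` as `c → +∞`. -/
theorem integral_ratio_tendsto_one
    (ω : ℝ → ℝ) (hcad : Cadlag ω) (hnonneg : ∀ y : ℝ, 0 ≤ ω y) (h0 : ω 0 = 0)
    (hext : ContinuousAtLocalExtrema ω)
    (hmin : ∀ y : ℝ, y ≠ 0 → 0 < min (ω y) (Function.leftLim ω y))
    (a α β b : ℝ) (h1 : a ≤ α) (h2 : α < 0) (h3 : 0 < β) (h4 : β ≤ b) :
    Tendsto (fun c : ℝ =>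
        (∫ y in a..b, Real.exp (-(c * ω y))) / (∫ y in α..β, Real.exp (-(c * ω y))))
      atTop (𝓝 1) :=
  integral_ratio_tendsto_one_general ω hcad hnonneg h0 hmin a α β b h1 h2 h3 h4
end

section
/- Let ω : ℝ → ℝ be a good environment. Then for every c > 0 there exists a standard valley with height c of ω, i.e. a triplet (𝔭_c, 𝔪_c, 𝔮_c) of elements of M_c(ω) with 𝔭_c < 𝔪_c < 𝔮_c such that: 𝔪_c and 0 belong to [𝔭_c, 𝔮_c]; 𝔭_c and 𝔮_c are c-maxima of ω; 𝔪_c is a c-minimum of ω; and 𝔭_c, 𝔪_c, 𝔮_c are successive elements of M_c(ω) (no other c-extremum of ω lies strictly between 𝔭_c and 𝔮_c). -/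
open Filter Set Topology Function

/-- `ω` has a `c`-minimum at `x0`: there are `ξ < x0 < ζ` with
`ω(ξ) ≥ (ω(x0) ∧ ω(x0−)) + c`, `ω(ζ−) ≥ (ω(x0) ∧ ω(x0−)) + c`, and
`ω(x) ∧ ω(x−) > ω(x0) ∧ ω(x0−)` for all `x ∈ (ξ,ζ)`, `x ≠ x0`. -/
def CMinimum (ω : ℝ → ℝ) (c x0 : ℝ) : Prop :=
  ∃ ξ ζ : ℝ, ξ < x0 ∧ x0 < ζ ∧
    min (ω x0) (Function.leftLim ω x0) + c ≤ ω ξ ∧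
    min (ω x0) (Function.leftLim ω x0) + c ≤ Function.leftLim ω ζ ∧
    ∀ x ∈ Set.Ioo ξ ζ, x ≠ x0 →
      min (ω x0) (Function.leftLim ω x0) < min (ω x) (Function.leftLim ω x)

/-- `ω` has a `c`-maximum at `x0` if `−ω` has a `c`-minimum at `x0`. -/
def CMaximum (ω : ℝ → ℝ) (c x0 : ℝ) : Prop :=
  CMinimum (fun x => -ω x) c x0

/-- `M_c(ω)`, the set of `c`-extrema of `ω`. -/
def CExtrema (ω : ℝ → ℝ) (c : ℝ) : Set ℝ :=
  {x : ℝ | CMinimum ω c x ∨ CMaximum ω c x}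


/-- A càdlàg `ω : ℝ → ℝ` is a good environment if
`limsup_{x→±∞} ω(x) = +∞`, `liminf_{x→±∞} ω(x) = −∞`, `ω` is continuous at its local
extrema, and `ω` takes pairwise distinct values at its local extrema. -/
def GoodEnvironment (ω : ℝ → ℝ) : Prop :=
  Cadlag ω ∧
  (∀ M : ℝ, ∃ᶠ x in atTop, M < ω x) ∧ (∀ M : ℝ, ∃ᶠ x in atTop, ω x < M) ∧
  (∀ M : ℝ, ∃ᶠ x in atBot, M < ω x) ∧ (∀ M : ℝ, ∃ᶠ x in atBot, ω x < M) ∧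
  (∀ x0 : ℝ, LocalExtremum ω x0 → ω x0 = Function.leftLim ω x0) ∧
  (∀ x y : ℝ, LocalExtremum ω x → LocalExtremum ω y → x ≠ y → ω x ≠ ω y)

/-- `(p, m, q)` is a standard valley with height `c` of `ω`: `p < m < q`, `m` and `0`
belong to `[p,q]`, `p` and `q` are `c`-maxima, `m` is a `c`-minimum, and they are
successive elements of `M_c(ω)` (no other `c`-extremum lies strictly between `p` and
`q`). -/
def StandardValley (ω : ℝ → ℝ) (c p m q : ℝ) : Prop :=
  p < m ∧ m < q ∧ p ≤ 0 ∧ 0 ≤ q ∧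
  CMaximum ω c p ∧ CMaximum ω c q ∧ CMinimum ω c m ∧
  ∀ z ∈ Set.Ioo p q, z ∈ CExtrema ω c → z = m

/-!
The lower envelope `x ↦ min (ω x) (ω (x−))` of a càdlàg function is lower semicontinuous, so it
attains its minimum on every compact interval. If that minimum lies at least `c` below the
envelope at both endpoints, the minimiser is a `c`-minimum: it is a local extremum, hence a
continuity point, and since `ω` takes distinct values at local extrema it is the only minimiser.
The oscillations of `ω` at `±∞` provide such intervals arbitrarily far out, and two `c`-minima
(applied to `-ω`: two `c`-maxima) provide one between them. On each side of a point `ω`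
oscillates by less than `c`, which leaves room for at most one `c`-minimum there; so the
`c`-extrema are locally finite, consecutive ones alternate between minima and maxima, and the
`c`-extrema next to `0` form a standard valley.
-/

variable {ω : ℝ → ℝ} {a b c m p q t x y z₁ z₂ L M : ℝ}

theorem IsCompact.finite_inter_of_forall_nhds {X : Type*} [TopologicalSpace X] {S K : Set X}
    (hK : IsCompact K) (h : ∀ x ∈ K, ∃ U ∈ 𝓝 x, (S ∩ U).Finite) : (S ∩ K).Finite := by
  choose! U hU hfin using h
  obtain ⟨s, hsK, hcover⟩ := hK.elim_nhds_subcover U hU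
  refine (s.finite_toSet.biUnion fun x hx => hfin x (hsK x hx)).subset ?_
  rintro y ⟨hyS, hyK⟩
  obtain ⟨x, hx, hyx⟩ := mem_iUnion₂.1 (hcover hyK)
  exact mem_biUnion hx ⟨hyS, hyx⟩

namespace Cadlag

theorem tendsto_leftLim (hω : Cadlag ω) (x : ℝ) :
    Tendsto ω (𝓝[<] x) (𝓝 (leftLim ω x)) := by
  obtain ⟨l, hl⟩ := hω.2 x
  rwa [leftLim_eq_of_tendsto hl]

theorem leftLim_neg (hω : Cadlag ω) (x : ℝ) :
    leftLim (fun y => -ω y) x = -leftLim ω x :=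
  leftLim_eq_of_tendsto (hω.tendsto_leftLim x).neg

theorem neg (hω : Cadlag ω) : Cadlag (fun y => -ω y) :=
  ⟨fun x => (hω.1 x).neg, fun x => ⟨_, (hω.tendsto_leftLim x).neg⟩⟩

theorem exists_lt_mapsTo_Ioo (hω : Cadlag ω) {U : Set ℝ} (hU : U ∈ 𝓝 (leftLim ω x)) :
    ∃ u < x, MapsTo ω (Ioo u x) U :=
  mem_nhdsLT_iff_exists_Ioo_subset.1 (hω.tendsto_leftLim x hU)

theorem exists_gt_mapsTo_Ico (hω : Cadlag ω) {U : Set ℝ} (hU : U ∈ 𝓝 (ω x)) :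
    ∃ w > x, MapsTo ω (Ico x w) U :=
  mem_nhdsGE_iff_exists_Ico_subset.1 (hω.1 x hU)

theorem le_min_leftLim (hω : Cadlag ω) (h : ∀ z ∈ Ioo a b, M ≤ ω z) (hy : y ∈ Ioo a b) :
    M ≤ min (ω y) (leftLim ω y) :=
  le_min (h y hy) <| ge_of_tendsto (hω.tendsto_leftLim y) <|
    eventually_of_mem (Ioo_mem_nhdsLT hy.1) fun z hz => h z ⟨hz.1, hz.2.trans hy.2⟩

theorem max_leftLim_le (hω : Cadlag ω) (h : ∀ z ∈ Ioo a b, ω z ≤ M) (hy : y ∈ Ioo a b) :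
    max (ω y) (leftLim ω y) ≤ M :=
  max_le (h y hy) <| le_of_tendsto (hω.tendsto_leftLim y) <|
    eventually_of_mem (Ioo_mem_nhdsLT hy.1) fun z hz => h z ⟨hz.1, hz.2.trans hy.2⟩

theorem lowerSemicontinuous_min_leftLim (hω : Cadlag ω) :
    LowerSemicontinuous fun x => min (ω x) (leftLim ω x) := by
  intro x v hv
  obtain ⟨v', hvv', hv'⟩ := exists_between hv
  obtain ⟨u, hux, hu⟩ := hω.exists_lt_mapsTo_Ioo (Ioi_mem_nhds (hv'.trans_le (min_le_right _ _)))
  obtain ⟨w, hxw, hw⟩ := hω.exists_gt_mapsTo_Ico (Ioi_mem_nhds (hv'.trans_le (min_le_left _ _)))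
  have hlt : ∀ y ∈ Ioo u w, v' ≤ ω y := fun y hy =>
    (lt_or_ge y x).elim (fun h => (hu ⟨hy.1, h⟩).le) (fun h => (hw ⟨h, hy.2⟩).le)
  filter_upwards [Ioo_mem_nhds hux hxw] with y hy
  exact hvv'.trans_le (hω.le_min_leftLim hlt hy)

theorem eventually_lt_min_leftLim (hω : Cadlag ω) (h : M < ω x) :
    ∀ᶠ y in 𝓝[>] x, M < min (ω y) (leftLim ω y) := by
  obtain ⟨M', hMM', hM'⟩ := exists_between h
  obtain ⟨w, hxw, hw⟩ := hω.exists_gt_mapsTo_Ico (Ioi_mem_nhds hM')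
  filter_upwards [Ioo_mem_nhdsGT hxw] with y hy
  exact hMM'.trans_le (hω.le_min_leftLim (fun z hz => (hw ⟨hz.1.le, hz.2⟩).le) hy)

end Cadlag

theorem localExtremum_of_isMinOn {U : Set ℝ} (hU : U ∈ 𝓝 x)
    (h : IsMinOn (fun y => min (ω y) (leftLim ω y)) U x) : LocalExtremum ω x := by
  obtain ⟨ε, hε, hball⟩ := Metric.mem_nhds_iff.1 hU
  have hle : ∀ y ∈ Ioo (x - ε) (x + ε), min (ω x) (leftLim ω x) ≤ ω y := fun y hy =>
    (h (hball (show y ∈ Metric.ball x ε by rwa [Real.ball_eq_Ioo]))).trans (min_le_left _ _)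
  rcases min_choice (ω x) (leftLim ω x) with hmin | hmin
  · exact Or.inr <| Or.inr <| Or.inr
      ⟨ε, hε, fun y hy => hmin ▸ hle y ⟨by linarith [hy.1], hy.2⟩⟩
  · exact Or.inr <| Or.inr <| Or.inl
      ⟨ε, hε, fun y hy => hmin ▸ hle y ⟨hy.1, by linarith [hy.2]⟩⟩

theorem CMinimum.localExtremum (h : CMinimum ω c x) : LocalExtremum ω x := by
  obtain ⟨ξ, ζ, hξ, hζ, -, -, hlt⟩ := h
  refine localExtremum_of_isMinOn (Ioo_mem_nhds hξ hζ) (isMinOn_iff.2 fun y hy => ?_)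
  rcases eq_or_ne y x with rfl | hne
  exacts [le_refl _, (hlt y hy hne).le]

theorem CMinimum.exists_le_max_leftLim (h₁ : CMinimum ω c z₁) (h₂ : CMinimum ω c z₂)
    (h : z₁ < z₂) : ∃ s ∈ Icc z₁ z₂,
      max (min (ω z₁) (leftLim ω z₁)) (min (ω z₂) (leftLim ω z₂)) + c ≤
        max (ω s) (leftLim ω s) := by
  obtain ⟨ξ₁, ζ₁, hξ₁, hζ₁, -, hζ₁c, hlt₁⟩ := h₁
  obtain ⟨ξ₂, ζ₂, hξ₂, hζ₂, hξ₂c, -, hlt₂⟩ := h₂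
  -- of two `c`-minima, the lower one cannot lie in the window of the higher one
  rcases le_total (min (ω z₁) (leftLim ω z₁)) (min (ω z₂) (leftLim ω z₂)) with hle | hle
  · have hz₁ξ₂ : z₁ ≤ ξ₂ := not_lt.1 fun hξ => hle.not_gt (hlt₂ z₁ ⟨hξ, h.trans hζ₂⟩ h.ne)
    exact ⟨ξ₂, ⟨hz₁ξ₂, hξ₂.le⟩, by rw [max_eq_right hle]; exact hξ₂c.trans (le_max_left _ _)⟩
  · have hζ₁z₂ : ζ₁ ≤ z₂ := not_lt.1 fun hζ => hle.not_gt (hlt₁ z₂ ⟨hξ₁.trans h, hζ⟩ h.ne')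
    exact ⟨ζ₁, ⟨hζ₁.le, hζ₁z₂⟩, by rw [max_eq_left hle]; exact hζ₁c.trans (le_max_right _ _)⟩

theorem Cadlag.subsingleton_cMinimum_of_mapsTo (hω : Cadlag ω) (hM : M < m + c)
    (h : MapsTo ω (Ioo a b) (Icc m M)) : ({x | CMinimum ω c x} ∩ Ioo a b).Subsingleton := by
  have hlt : ∀ z₁ ∈ {x | CMinimum ω c x} ∩ Ioo a b, ∀ z₂ ∈ {x | CMinimum ω c x} ∩ Ioo a b,
      ¬z₁ < z₂ := by
    rintro z₁ ⟨h₁, hz₁⟩ z₂ ⟨h₂, hz₂⟩ h₁₂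
    obtain ⟨s, hs, hsc⟩ := h₁.exists_le_max_leftLim h₂ h₁₂
    have hlow := hω.le_min_leftLim (fun z hz => (h hz).1) hz₁
    have hhigh := hω.max_leftLim_le (fun z hz => (h hz).2)
      ⟨hz₁.1.trans_le hs.1, hs.2.trans_lt hz₂.2⟩
    linarith [le_max_left (min (ω z₁) (leftLim ω z₁)) (min (ω z₂) (leftLim ω z₂))]
  exact fun z₁ h₁ z₂ h₂ => le_antisymm (not_lt.1 (hlt z₂ h₂ z₁ h₁)) (not_lt.1 (hlt z₁ h₁ z₂ h₂))

theorem Cadlag.exists_nhds_finite_cMinimum (hω : Cadlag ω) (hc : 0 < c) (x : ℝ) :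
    ∃ U ∈ 𝓝 x, ({y | CMinimum ω c y} ∩ U).Finite := by
  obtain ⟨u, hux, hu⟩ := hω.exists_lt_mapsTo_Ioo <|
    Ioo_mem_nhds (sub_lt_self (leftLim ω x) (by positivity : 0 < c / 3))
      (lt_add_of_pos_right (leftLim ω x) (by positivity : 0 < c / 3))
  obtain ⟨w, hxw, hw⟩ := hω.exists_gt_mapsTo_Ico <|
    Ioo_mem_nhds (sub_lt_self (ω x) (by positivity : 0 < c / 3))
      (lt_add_of_pos_right (ω x) (by positivity : 0 < c / 3))
  have hleft := hω.subsingleton_cMinimum_of_mapsTo (c := c) (M := leftLim ω x + c / 3) (by linarith)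
    fun y hy => Ioo_subset_Icc_self (hu hy)
  have hright := hω.subsingleton_cMinimum_of_mapsTo (a := x) (c := c) (M := ω x + c / 3) (by linarith)
    fun y hy => Ioo_subset_Icc_self (hw ⟨hy.1.le, hy.2⟩)
  refine ⟨Ioo u w, Ioo_mem_nhds hux hxw, ((hleft.finite.union hright.finite).insert x).subset ?_⟩
  rintro y ⟨hy, hyu, hyw⟩
  rcases lt_trichotomy y x with hyx | rfl | hxy
  · exact Or.inr (Or.inl ⟨hy, hyu, hyx⟩)
  · exact Or.inl rfl
  · exact Or.inr (Or.inr ⟨hy, hxy, hyw⟩)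

theorem Cadlag.finite_cExtrema_inter_Icc (hω : Cadlag ω) (hc : 0 < c) (a b : ℝ) :
    (CExtrema ω c ∩ Icc a b).Finite := by
  have hmin := (isCompact_Icc (a := a) (b := b)).finite_inter_of_forall_nhds
    (S := {x | CMinimum ω c x}) fun x _ => hω.exists_nhds_finite_cMinimum hc x
  have hmax := (isCompact_Icc (a := a) (b := b)).finite_inter_of_forall_nhds
    (S := {x | CMaximum ω c x}) fun x _ => hω.neg.exists_nhds_finite_cMinimum hc x
  refine (hmin.union hmax).subset ?_
  rintro x ⟨hx | hx, hab⟩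
  exacts [Or.inl ⟨hx, hab⟩, Or.inr ⟨hx, hab⟩]

theorem localExtremum_neg (hω : Cadlag ω) :
    LocalExtremum (fun y => -ω y) x ↔ LocalExtremum ω x := by
  simp only [LocalExtremum, LeftLocalMax, RightLocalMax, LeftLocalMin, RightLocalMin,
    hω.leftLim_neg, neg_le_neg_iff, or_comm, or_left_comm, or_assoc]

/-- The local conditions in `GoodEnvironment`; unlike the conditions at `±∞`, they are preserved
by `ω ↦ -ω`, which exchanges `c`-minima and `c`-maxima. -/
structure GenericCadlag (ω : ℝ → ℝ) : Prop where
  cadlag : Cadlag ω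
  eq_leftLim : ∀ x, LocalExtremum ω x → ω x = leftLim ω x
  ne_of_localExtremum : ∀ x y, LocalExtremum ω x → LocalExtremum ω y → x ≠ y → ω x ≠ ω y

namespace GenericCadlag

theorem neg (hg : GenericCadlag ω) : GenericCadlag (fun y => -ω y) where
  cadlag := hg.cadlag.neg
  eq_leftLim x hx := by
    rw [hg.cadlag.leftLim_neg, hg.eq_leftLim x ((localExtremum_neg hg.cadlag).1 hx)]
  ne_of_localExtremum x y hx hy hxy := by
    simpa using hg.ne_of_localExtremum x y ((localExtremum_neg hg.cadlag).1 hx)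
      ((localExtremum_neg hg.cadlag).1 hy) hxy

theorem min_leftLim_eq (hg : GenericCadlag ω) (hx : LocalExtremum ω x) :
    min (ω x) (leftLim ω x) = ω x := by
  rw [← hg.eq_leftLim x hx, min_self]

theorem exists_cMinimum_of_barriers (hg : GenericCadlag ω) (hc : 0 < c) (ht : t ∈ Icc a b)
    (htL : min (ω t) (leftLim ω t) ≤ L) (ha : L + c ≤ min (ω a) (leftLim ω a))
    (hb : L + c ≤ min (ω b) (leftLim ω b)) : ∃ x ∈ Ioo a b, CMinimum ω c x := by
  set g : ℝ → ℝ := fun y => min (ω y) (leftLim ω y)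
  obtain ⟨x, hx, hmin⟩ := (hg.cadlag.lowerSemicontinuous_min_leftLim.lowerSemicontinuousOn
    (Icc a b)).exists_isMinOn ⟨t, ht⟩ isCompact_Icc
  have hxL : g x ≤ L := (hmin ht).trans htL
  have hax : a < x := hx.1.lt_of_ne (by rintro rfl; linarith)
  have hxb : x < b := hx.2.lt_of_ne (by rintro rfl; linarith)
  have hext : ∀ y ∈ Ioo a b, IsMinOn g (Icc a b) y → LocalExtremum ω y := fun y hy hy_min =>
    localExtremum_of_isMinOn (Icc_mem_nhds hy.1 hy.2) hy_min
  refine ⟨x, ⟨hax, hxb⟩, a, b, hax, hxb, by linarith [min_le_left (ω a) (leftLim ω a)],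
    by linarith [min_le_right (ω b) (leftLim ω b)], fun y hy hyx => ?_⟩
  refine (hmin (Ioo_subset_Icc_self hy)).lt_of_ne fun hxy => ?_
  have hy_min : IsMinOn g (Icc a b) y := isMinOn_iff.2 fun z hz => hxy.symm.trans_le (hmin hz)
  apply hg.ne_of_localExtremum y x (hext y hy hy_min) (hext x ⟨hax, hxb⟩ hmin) hyx
  rw [← hg.min_leftLim_eq (hext y hy hy_min), ← hg.min_leftLim_eq (hext x ⟨hax, hxb⟩ hmin)]
  exact hxy.symm

theorem leftLim_eq_of_cMinimum (hg : GenericCadlag ω) (h : CMinimum ω c x) :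
    leftLim ω x = ω x :=
  (hg.eq_leftLim x h.localExtremum).symm

theorem exists_cMaximum_between (hg : GenericCadlag ω) (hc : 0 < c) (h₁ : CMinimum ω c z₁)
    (h₂ : CMinimum ω c z₂) (h : z₁ < z₂) : ∃ y ∈ Ioo z₁ z₂, CMaximum ω c y := by
  obtain ⟨s, hs, hsc⟩ := h₁.exists_le_max_leftLim h₂ h
  rw [hg.leftLim_eq_of_cMinimum h₁, hg.leftLim_eq_of_cMinimum h₂, min_self, min_self] at hsc
  refine hg.neg.exists_cMinimum_of_barriers hc hs (L := -(max (ω z₁) (ω z₂) + c)) ?_ ?_ ?_ <;>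
    simp only [hg.cadlag.leftLim_neg, min_neg_neg, hg.leftLim_eq_of_cMinimum h₁,
      hg.leftLim_eq_of_cMinimum h₂, max_self] <;>
    linarith [le_max_left (ω z₁) (ω z₂), le_max_right (ω z₁) (ω z₂)]

theorem exists_cMinimum_between (hg : GenericCadlag ω) (hc : 0 < c) (h₁ : CMaximum ω c z₁)
    (h₂ : CMaximum ω c z₂) (h : z₁ < z₂) : ∃ y ∈ Ioo z₁ z₂, CMinimum ω c y := by
  simpa [CMaximum] using hg.neg.exists_cMaximum_between hc h₁ h₂ h

theorem exists_cMinimum_gt (hg : GenericCadlag ω) (hc : 0 < c)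
    (hhi : ∀ M : ℝ, ∃ᶠ x in atTop, M < ω x) (hlo : ∀ M : ℝ, ∃ᶠ x in atTop, ω x < M)
    (x₀ : ℝ) : ∃ x, x₀ < x ∧ CMinimum ω c x := by
  set L := min (ω x₀) (leftLim ω x₀) - c with hL
  obtain ⟨t, hx₀t, ht⟩ := frequently_atTop.1 (hlo L) x₀
  obtain ⟨b₀, htb₀, hb₀⟩ := frequently_atTop.1 (hhi (L + c)) t
  obtain ⟨b, hb, hb₀b⟩ :=
    ((hg.cadlag.eventually_lt_min_leftLim hb₀).and self_mem_nhdsWithin).exists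
  obtain ⟨x, hx, hxc⟩ := hg.exists_cMinimum_of_barriers hc ⟨hx₀t, htb₀.trans (le_of_lt hb₀b)⟩
    ((min_le_left _ _).trans ht.le) (by rw [hL, sub_add_cancel]) hb.le
  exact ⟨x, hx.1, hxc⟩

theorem exists_cMinimum_lt (hg : GenericCadlag ω) (hc : 0 < c)
    (hhi : ∀ M : ℝ, ∃ᶠ x in atBot, M < ω x) (hlo : ∀ M : ℝ, ∃ᶠ x in atBot, ω x < M)
    (x₀ : ℝ) : ∃ x, x < x₀ ∧ CMinimum ω c x := by
  set L := min (ω x₀) (leftLim ω x₀) - c with hL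
  obtain ⟨t, htx₀, ht⟩ := frequently_atBot.1 (hlo L) x₀
  obtain ⟨a₀, ha₀t, ha₀⟩ := frequently_atBot.1 (hhi (L + c)) (t - 1)
  obtain ⟨a, ha, hat⟩ := ((hg.cadlag.eventually_lt_min_leftLim ha₀).and
    (Ioo_mem_nhdsGT (by linarith : a₀ < t))).exists
  obtain ⟨x, hx, hxc⟩ := hg.exists_cMinimum_of_barriers hc ⟨hat.2.le, htx₀⟩
    ((min_le_left _ _).trans ht.le) ha.le (by rw [hL, sub_add_cancel])
  exact ⟨x, hx.2, hxc⟩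

theorem exists_next_cExtremum (hg : GenericCadlag ω) (hc : 0 < c)
    (hhi : ∀ M : ℝ, ∃ᶠ x in atTop, M < ω x) (hlo : ∀ M : ℝ, ∃ᶠ x in atTop, ω x < M)
    (e : ℝ) : ∃ q ∈ CExtrema ω c, e < q ∧ ∀ y ∈ Ioo e q, y ∉ CExtrema ω c := by
  obtain ⟨z, hez, hz⟩ := hg.exists_cMinimum_gt hc hhi hlo e
  have hfin : (CExtrema ω c ∩ Ioc e z).Finite := (hg.cadlag.finite_cExtrema_inter_Icc hc e z).subset
    (inter_subset_inter_right _ Ioc_subset_Icc_self)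
  obtain ⟨q, ⟨hqE, heq, hqz⟩, hleast⟩ :=
    exists_min_image _ id hfin ⟨z, Or.inl hz, hez, le_refl z⟩
  exact ⟨q, hqE, heq, fun y hy hyE =>
    (hleast y ⟨hyE, hy.1, hy.2.le.trans hqz⟩).not_gt hy.2⟩

theorem exists_prev_cExtremum (hg : GenericCadlag ω) (hc : 0 < c)
    (hhi : ∀ M : ℝ, ∃ᶠ x in atBot, M < ω x) (hlo : ∀ M : ℝ, ∃ᶠ x in atBot, ω x < M)
    (e : ℝ) : ∃ p ∈ CExtrema ω c, p < e ∧ ∀ y ∈ Ioo p e, y ∉ CExtrema ω c := by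
  obtain ⟨z, hze, hz⟩ := hg.exists_cMinimum_lt hc hhi hlo e
  have hfin : (CExtrema ω c ∩ Ico z e).Finite := (hg.cadlag.finite_cExtrema_inter_Icc hc z e).subset
    (inter_subset_inter_right _ Ico_subset_Icc_self)
  obtain ⟨p, ⟨hpE, hzp, hpe⟩, hgreatest⟩ :=
    exists_max_image _ id hfin ⟨z, Or.inl hz, le_refl z, hze⟩
  exact ⟨p, hpE, hpe, fun y hy hyE =>
    (hgreatest y ⟨hyE, hzp.trans hy.1.le, hy.2⟩).not_gt hy.1⟩

theorem cMaximum_of_gap_right (hg : GenericCadlag ω) (hc : 0 < c) (hm : CMinimum ω c m)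
    (hq : q ∈ CExtrema ω c) (hmq : m < q) (hgap : ∀ y ∈ Ioo m q, y ∉ CExtrema ω c) :
    CMaximum ω c q :=
  hq.resolve_left fun hq =>
    let ⟨y, hy, hymax⟩ := hg.exists_cMaximum_between hc hm hq hmq
    hgap y hy (Or.inr hymax)

theorem cMaximum_of_gap_left (hg : GenericCadlag ω) (hc : 0 < c) (hm : CMinimum ω c m)
    (hp : p ∈ CExtrema ω c) (hpm : p < m) (hgap : ∀ y ∈ Ioo p m, y ∉ CExtrema ω c) :
    CMaximum ω c p :=
  hp.resolve_left fun hp =>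
    let ⟨y, hy, hymax⟩ := hg.exists_cMaximum_between hc hp hm hpm
    hgap y hy (Or.inr hymax)

theorem cMinimum_of_gap_left (hg : GenericCadlag ω) (hc : 0 < c) (hq : CMaximum ω c q)
    (hm : m ∈ CExtrema ω c) (hmq : m < q) (hgap : ∀ y ∈ Ioo m q, y ∉ CExtrema ω c) :
    CMinimum ω c m :=
  hm.resolve_right fun hm =>
    let ⟨y, hy, hymin⟩ := hg.exists_cMinimum_between hc hm hq hmq
    hgap y hy (Or.inl hymin)

theorem standardValley_of_gaps (hg : GenericCadlag ω) (hc : 0 < c) (hm : CMinimum ω c m)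
    (hp : p ∈ CExtrema ω c) (hq : q ∈ CExtrema ω c) (hpm : p < m) (hmq : m < q) (hp0 : p ≤ 0)
    (hq0 : 0 ≤ q) (hgapp : ∀ y ∈ Ioo p m, y ∉ CExtrema ω c)
    (hgapq : ∀ y ∈ Ioo m q, y ∉ CExtrema ω c) : StandardValley ω c p m q := by
  refine ⟨hpm, hmq, hp0, hq0, hg.cMaximum_of_gap_left hc hm hp hpm hgapp,
    hg.cMaximum_of_gap_right hc hm hq hmq hgapq, hm, fun z hz hzE => ?_⟩
  rcases lt_trichotomy z m with hzm | rfl | hmz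
  exacts [absurd hzE (hgapp z ⟨hz.1, hzm⟩), rfl, absurd hzE (hgapq z ⟨hmz, hz.2⟩)]

end GenericCadlag

/-- Let `ω : ℝ → ℝ` be a good environment.  Then for every `c > 0`
there exists a standard valley with height `c` of `ω`. -/
theorem exists_standardValley
    (ω : ℝ → ℝ) (hgood : GoodEnvironment ω) (c : ℝ) (hc : 0 < c) :
    ∃ p m q : ℝ, StandardValley ω c p m q := by
  obtain ⟨hω, hhiTop, hloTop, hhiBot, hloBot, hcont, hdist⟩ := hgood
  have hg : GenericCadlag ω := ⟨hω, hcont, hdist⟩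
  have next := hg.exists_next_cExtremum hc hhiTop hloTop
  have prev := hg.exists_prev_cExtremum hc hhiBot hloBot
  obtain ⟨q₀, hq₀, hq₀_pos, hgap₀⟩ := next 0
  have nonpos_of_lt : ∀ y ∈ CExtrema ω c, y < q₀ → y ≤ 0 := fun y hy hyq₀ =>
    not_lt.1 fun hy_pos => hgap₀ y ⟨hy_pos, hyq₀⟩ hy
  rcases hq₀ with hmin | hmax
  · obtain ⟨p, hp, hpq₀, hgapp⟩ := prev q₀
    obtain ⟨q, hq, hq₀q, hgapq⟩ := next q₀
    exact ⟨p, q₀, q, hg.standardValley_of_gaps hc hmin hp hq hpq₀ hq₀q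
      (nonpos_of_lt p hp hpq₀) (hq₀_pos.trans hq₀q).le hgapp hgapq⟩
  · obtain ⟨m, hm, hmq₀, hgapm⟩ := prev q₀
    obtain ⟨p, hp, hpm, hgapp⟩ := prev m
    exact ⟨p, m, q₀, hg.standardValley_of_gaps hc (hg.cMinimum_of_gap_left hc hmax hm hmq₀ hgapm)
      hp (Or.inr hmax) hpm hmq₀ (hpm.le.trans (nonpos_of_lt m hm hmq₀)) hq₀_pos.le hgapp hgapm⟩
end
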